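/- arXiv:1811.01296 — 6 statements merged into one kernel-verified Lean document; each statement's English description precedes it below -/
import Mathlib

section
/- Let d ≥ 2, let B be a {0,1}-matrix with k rows and m columns such that for all u ∈ ℕ^m and v ∈ {0,…,d−1}^m, Bu = Bv implies u = v. Define the block matrix M with dk+d rows and dm+k columns consisting of: a first block row (B B ⋯ B I) with d copies of B and the k×k identity I; block rows (B, J−B) in positions (i,1) and (i,i) for i = 2,…,d, where J is the k×m all-ones matrix; followed by d rows of ones, one over each block of columns. Then M is a {0,1}-matrix and for all u ∈ ℕ^{dm+k} and v ∈ {0,…,d−1}^{dm+k}, Mu = Mv implies u = v. -/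
/-!
Index the blocks from `0`. Write `x j`, `y j` for the column blocks of `u`, `v` over the copies
of `B` and `a`, `b` for their blocks over the identity. For `i ≠ 0`, row block `i`, which is `B`
on column block `0` and `J - B` on column block `i`, together with the all-ones row over column
block `i` gives `B x i - B y i = B x 0 - B y 0 =: δ`; so row block `0` reads `d δ + a = b`.
Since `a ≥ 0` and `b < d`, every entry of `δ` is `≤ 0`, while the all-ones row over the identity
block gives `∑ a = ∑ b`; hence `δ = 0` and `a = b`. Then `B x j = B y j` for all `j`, and `B`
detects `x j = y j`.
-/

open Matrix

theorem eq_zero_and_eq_of_mul_add_eq {ι : Type*} [Fintype ι] {d : ℕ} {δ : ι → ℤ} {a b : ι → ℕ}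
    (hb : ∀ r, b r < d) (h : ∀ r, d * δ r + a r = b r) (hsum : ∑ r, a r = ∑ r, b r) :
    δ = 0 ∧ a = b := by
  have hδ : ∀ r, δ r ≤ 0 := fun r => by
    have hr := h r
    have hbr := hb r
    nlinarith
  have hzero : ∑ r, (d : ℤ) * δ r = 0 := by
    have hsumZ : (∑ r, (a r : ℤ)) = ∑ r, (b r : ℤ) := by exact_mod_cast hsum
    rw [Finset.sum_congr rfl fun r _ => eq_sub_of_add_eq (h r), Finset.sum_sub_distrib, hsumZ,
      sub_self]
  have hall := (Finset.sum_eq_zero_iff_of_nonpos fun r _ =>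
    mul_nonpos_of_nonneg_of_nonpos (Nat.cast_nonneg d) (hδ r)).1 hzero
  have hd : ∀ r, (d : ℤ) ≠ 0 := fun r => by have := hb r; omega
  refine ⟨funext fun r => ?_, funext fun r => ?_⟩
  · exact (mul_eq_zero.1 (hall r (Finset.mem_univ r))).resolve_left (hd r)
  · have hr := h r
    have hdδ := hall r (Finset.mem_univ r)
    omega

namespace DetectingMatrix

variable {k m : ℕ}

def stepMatrix (d : ℕ) (B : Matrix (Fin k) (Fin m) ℕ) :
    Matrix ((Fin d × Fin k) ⊕ Fin d) ((Fin d × Fin m) ⊕ Fin k) ℕ :=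
  Matrix.of fun x y =>
      match x, y with
      | Sum.inl (i, r), Sum.inl (j, c) =>
          if (i : ℕ) = 0 then B r c
          else if (j : ℕ) = 0 then B r c
          else if j = i then 1 - B r c
          else 0
      | Sum.inl (i, r), Sum.inr c' => if (i : ℕ) = 0 ∧ c' = r then 1 else 0
      | Sum.inr t, Sum.inl (j, _) => if (j : ℕ) = (t : ℕ) + 1 then 1 else 0
      | Sum.inr t, Sum.inr _ => if (t : ℕ) = d - 1 then 1 else 0

def vecBlock {d : ℕ} (w : (Fin d × Fin m) ⊕ Fin k → ℕ) (j : Fin d) : Fin m → ℕ :=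
  fun c => w (.inl (j, c))

variable {B : Matrix (Fin k) (Fin m) ℕ}

theorem stepMatrix_le_one {d : ℕ} (hB : ∀ r c, B r c ≤ 1) (x y) : stepMatrix d B x y ≤ 1 := by
  rcases x with ⟨i, r⟩ | t <;> rcases y with ⟨j, c⟩ | c' <;>
    simp only [stepMatrix, of_apply] <;> split_ifs <;> first | exact hB _ _ | omega

variable {n : ℕ} (w : (Fin (n + 1) × Fin m) ⊕ Fin k → ℕ)

theorem stepMatrix_mulVec_inl_zero (r : Fin k) :
    (stepMatrix (n + 1) B *ᵥ w) (.inl (0, r)) = ∑ j, (B *ᵥ vecBlock w j) r + w (.inr r) := by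
  simp [stepMatrix, mulVec, dotProduct, Fintype.sum_sum_type, Fintype.sum_prod_type, vecBlock]

theorem stepMatrix_mulVec_inl_succ (hB : ∀ r c, B r c ≤ 1) (s : Fin n) (r : Fin k) :
    (stepMatrix (n + 1) B *ᵥ w) (.inl (s.succ, r)) + (B *ᵥ vecBlock w s.succ) r =
      (B *ᵥ vecBlock w 0) r + ∑ c, vecBlock w s.succ c := by
  simp only [mulVec, dotProduct, stepMatrix, of_apply, Fintype.sum_sum_type, Fintype.sum_prod_type,
    Fin.val_eq_zero_iff, Fin.succ_ne_zero, ↓reduceIte, ite_mul, zero_mul, Finset.sum_ite_irrel,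
    Finset.sum_const_zero, Fin.sum_univ_succ, Fin.succ_inj, Finset.sum_ite_eq', Finset.mem_univ,
    false_and, add_zero, vecBlock]
  rw [add_assoc, ← Finset.sum_add_distrib]
  congr 1
  refine Finset.sum_congr rfl fun c _ => ?_
  rw [← add_mul, Nat.sub_add_cancel (hB r c), one_mul]

theorem stepMatrix_mulVec_inr_castSucc (s : Fin n) :
    (stepMatrix (n + 1) B *ᵥ w) (.inr s.castSucc) = ∑ c, vecBlock w s.succ c := by
  simp [stepMatrix, mulVec, dotProduct, Fintype.sum_sum_type, Fintype.sum_prod_type, vecBlock,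
    Fin.sum_univ_succ, Fin.val_inj, s.isLt.ne]

theorem stepMatrix_mulVec_inr_last :
    (stepMatrix (n + 1) B *ᵥ w) (.inr (Fin.last n)) = ∑ r, w (.inr r) := by
  simp only [mulVec, dotProduct, stepMatrix, of_apply, Fintype.sum_sum_type, Fintype.sum_prod_type,
    Fin.val_last, add_tsub_cancel_right, ↓reduceIte, ite_mul, one_mul, zero_mul, Nat.add_eq_right,
    Finset.sum_eq_zero_iff, Finset.mem_univ, ite_eq_right_iff, forall_const]
  intro i c h
  exact absurd i.isLt (by omega)

theorem mulVec_vecBlock_sub_eq_block_zero (hB : ∀ r c, B r c ≤ 1)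
    {u v : (Fin (n + 1) × Fin m) ⊕ Fin k → ℕ}
    (huv : stepMatrix (n + 1) B *ᵥ u = stepMatrix (n + 1) B *ᵥ v) (j : Fin (n + 1)) (r : Fin k) :
    ((B *ᵥ vecBlock u j) r : ℤ) - (B *ᵥ vecBlock v j) r =
      (B *ᵥ vecBlock u 0) r - (B *ᵥ vecBlock v 0) r := by
  induction j using Fin.cases with
  | zero => rfl
  | succ s =>
    have hrow_u := stepMatrix_mulVec_inl_succ u hB s r
    have hrow_v := stepMatrix_mulVec_inl_succ v hB s r
    have hrow := congrFun huv (.inl (s.succ, r))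
    have hsum := congrFun huv (.inr s.castSucc)
    rw [stepMatrix_mulVec_inr_castSucc, stepMatrix_mulVec_inr_castSucc] at hsum
    omega

theorem eq_of_stepMatrix_mulVec_eq (hB01 : ∀ r c, B r c ≤ 1)
    (hBdet : ∀ u v : Fin m → ℕ, (∀ c, v c < n + 1) → B *ᵥ u = B *ᵥ v → u = v)
    {u v : (Fin (n + 1) × Fin m) ⊕ Fin k → ℕ} (hv : ∀ y, v y < n + 1)
    (huv : stepMatrix (n + 1) B *ᵥ u = stepMatrix (n + 1) B *ᵥ v) : u = v := by
  set δ : Fin k → ℤ := fun r => (B *ᵥ vecBlock u 0) r - (B *ᵥ vecBlock v 0) r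
  have hrow : ∀ r, ((n + 1 : ℕ) : ℤ) * δ r + u (.inr r) = v (.inr r) := fun r => by
    have h0 := congrFun huv (.inl (0, r))
    rw [stepMatrix_mulVec_inl_zero, stepMatrix_mulVec_inl_zero] at h0
    have hsub :
        ∑ j, (((B *ᵥ vecBlock u j) r : ℤ) - (B *ᵥ vecBlock v j) r) = (n + 1 : ℕ) * δ r := by
      simp only [mulVec_vecBlock_sub_eq_block_zero hB01 huv, Finset.sum_const, Finset.card_univ,
        Fintype.card_fin, nsmul_eq_mul, δ]
    rw [Finset.sum_sub_distrib] at hsub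
    zify at h0
    linarith
  obtain ⟨hδ, htail⟩ := eq_zero_and_eq_of_mul_add_eq (fun r => hv (.inr r)) hrow (by
    simpa only [stepMatrix_mulVec_inr_last] using congrFun huv (.inr (Fin.last n)))
  have hblock : ∀ j, B *ᵥ vecBlock u j = B *ᵥ vecBlock v j := fun j => by
    ext r
    have hdiff := mulVec_vecBlock_sub_eq_block_zero hB01 huv j r
    have hδr := congrFun hδ r
    simp only [δ, Pi.zero_apply] at hδr
    omega
  ext (⟨j, c⟩ | r)
  · exact congrFun (hBdet _ _ (fun c => hv _) (hblock j)) c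
  · exact congrFun htail r

end DetectingMatrix

/-- the recursive Cantor–Mills style construction. Given a one-sided
d-detecting {0,1}-matrix B (k rows, m columns), the block matrix M with d·k+d rows
and d·m+k columns — first block row (B B ⋯ B I), block rows (B, J−B) at positions
(i,1),(i,i) for i=2,…,d, followed by d all-ones rows, one over each of the column
blocks 2,…,d and the last block — is again a {0,1}-matrix and one-sided d-detecting. -/
theorem detecting_matrix_recursive_step (d k m : ℕ) (hd : 2 ≤ d)
    (B : Matrix (Fin k) (Fin m) ℕ)
    (hB01 : ∀ r c, B r c ≤ 1)
    (hBdet : ∀ u v : Fin m → ℕ, (∀ c, v c < d) →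
      B.mulVec u = B.mulVec v → u = v)
    (M : Matrix ((Fin d × Fin k) ⊕ Fin d) ((Fin d × Fin m) ⊕ Fin k) ℕ)
    (hM : ∀ x y, M x y =
      match x, y with
      | Sum.inl (i, r), Sum.inl (j, c) =>
          if (i : ℕ) = 0 then B r c
          else if (j : ℕ) = 0 then B r c
          else if j = i then 1 - B r c
          else 0
      | Sum.inl (i, r), Sum.inr c' => if (i : ℕ) = 0 ∧ c' = r then 1 else 0
      | Sum.inr t, Sum.inl (j, _) => if (j : ℕ) = (t : ℕ) + 1 then 1 else 0
      | Sum.inr t, Sum.inr _ => if (t : ℕ) = d - 1 then 1 else 0) :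
    (∀ x y, M x y ≤ 1) ∧
    (∀ u v : ((Fin d × Fin m) ⊕ Fin k) → ℕ, (∀ y, v y < d) →
      M.mulVec u = M.mulVec v → u = v) := by
  obtain ⟨n, rfl⟩ : ∃ n, d = n + 1 := ⟨d - 1, by omega⟩
  obtain rfl : M = DetectingMatrix.stepMatrix (n + 1) B := by
    ext (⟨i, r⟩ | t) (⟨j, c⟩ | c') <;> exact hM _ _
  exact ⟨DetectingMatrix.stepMatrix_le_one hB01, fun u v hv huv =>
    DetectingMatrix.eq_of_stepMatrix_mulVec_eq hB01 hBdet hv huv⟩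
end

section
/- Let a ∈ ℕ^n, b ∈ ℕ, and δ = ⌈log(1 + max_i a_i)⌉. For any x ∈ ℕ^n, the equation aᵀx = b holds if and only if there exist natural numbers y_0,…,y_{δ−2} (carry variables, with y_{−1} interpreted as 0) such that for each j = 0,…,δ−1: y_{j−1} + Σ_i a_i[j]·x_i = b[j] + 2·y_j, where a_i[j] denotes the j-th binary digit of a_i, b[j] the j-th binary digit of b for j < δ−1, and b[δ−1] is replaced by ⌊b/2^{δ−1}⌋, and y_{δ−1} is replaced by 0. -/
/-! Writing each `aᵢ` in binary gives `aᵀx = ∑ⱼ 2ʲ Aⱼ` with column sums `Aⱼ = ∑ᵢ aᵢ[j] xᵢ`, and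
such a sum equals `b` exactly when schoolbook addition of the columns, with carries, produces
the digits of `b`. The lowest column decides everythcarry_ing locally: `c + A₀` must have the parity
of `b` and passes the carry `(c + A₀) / 2` on, after which the same problem remains for `b / 2`,
so the carry chain is built by induction on the number of columns. -/

open Finset

theorem Nat.sum_range_two_pow_mul_bit (a m : ℕ) :
    ∑ j ∈ range m, 2 ^ j * (a / 2 ^ j % 2) = a % 2 ^ m := by
  induction m with
  | zero => simp [Nat.mod_one]
  | succ m ih => rw [sum_range_succ, ih, Nat.mod_pow_succ]

theorem sum_mul_eq_sum_two_pow_mul_sum_bit_mul {ι : Type*} (s : Finset ι) (a x : ι → ℕ) {m : ℕ}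
    (ha : ∀ i ∈ s, a i < 2 ^ m) :
    ∑ i ∈ s, a i * x i = ∑ j ∈ range m, 2 ^ j * ∑ i ∈ s, (a i / 2 ^ j % 2) * x i := by
  simp_rw [mul_sum, ← mul_assoc]
  rw [sum_comm]
  refine sum_congr rfl fun i hi => ?_
  rw [← sum_mul, Nat.sum_range_two_pow_mul_bit, Nat.mod_eq_of_lt (ha i hi)]

theorem exists_carry_iff_add_two_mul_eq (a b c s : ℕ) :
    (∃ c', c + a = b % 2 + 2 * c' ∧ c' + s = b / 2) ↔ c + a + 2 * s = b := by
  constructor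
  · rintro ⟨c', h₁, h₂⟩
    omega
  · intro h
    exact ⟨(c + a) / 2, by omega, by omega⟩

theorem exists_carry_chain_iff (A : ℕ → ℕ) (b c m : ℕ) :
    (∃ y : ℕ → ℕ, y 0 = c ∧ (∀ j < m, y j + A j = b / 2 ^ j % 2 + 2 * y (j + 1)) ∧
      y m + A m = b / 2 ^ m) ↔
    c + ∑ j ∈ range (m + 1), 2 ^ j * A j = b := by
  induction m generalizing A b c with
  | zero =>
    simp only [zero_add, range_one, sum_singleton, pow_zero, one_mul, Nat.div_one]
    exact ⟨fun ⟨y, hy₀, _, hy⟩ => hy₀ ▸ hy, fun h => ⟨fun _ => c, rfl, nofun, h⟩⟩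
  | succ m ih =>
    have hdiv : ∀ j, b / 2 ^ (j + 1) = b / 2 / 2 ^ j := fun j => by
      rw [pow_succ', Nat.div_div_eq_div_mul]
    have hsum : ∑ j ∈ range (m + 2), 2 ^ j * A j =
        A 0 + 2 * ∑ j ∈ range (m + 1), 2 ^ j * A (j + 1) := by
      rw [sum_range_succ', mul_sum, add_comm]
      simp only [pow_succ', mul_assoc, pow_zero, one_mul]
    rw [hsum, ← add_assoc, ← exists_carry_iff_add_two_mul_eq]
    simp_rw [← ih, Nat.forall_lt_succ_left, hdiv, pow_zero, Nat.div_one]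
    constructor
    · rintro ⟨y, rfl, ⟨h₀, hy⟩, hm⟩
      exact ⟨y 1, h₀, fun j => y (j + 1), rfl, hy, hm⟩
    · rintro ⟨c', h₀, y, rfl, hy, hm⟩
      exact ⟨fun | 0 => c | j + 1 => y j, rfl, ⟨h₀, hy⟩, hm⟩

/-- bitwise decomposition of a single linear constraint.
With δ = ⌈log(1 + maxᵢ aᵢ)⌉, for x ∈ ℕ^n the equation aᵀx = b holds iff there
are carry variables y₀,…,y_{δ−2} ∈ ℕ such that for each j = 0,…,δ−1:
y_{j−1} + Σᵢ aᵢ[j]·xᵢ = b[j] + 2·y_j, where y_{−1} = 0, y_{δ−1} is replaced by 0,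
and b[δ−1] is replaced by ⌊b/2^{δ−1}⌋. -/
theorem bitwise_constraint_decomposition (n : ℕ) (a : Fin n → ℕ) (b : ℕ)
    (x : Fin n → ℕ) (δ : ℕ)
    (hδ : δ = Nat.clog 2 (1 + Finset.univ.sup a)) (hδ1 : 1 ≤ δ) :
    (∑ i, a i * x i = b) ↔
      ∃ y : ℕ → ℕ, ∀ j < δ,
        (if j = 0 then 0 else y (j - 1)) +
            ∑ i, (if (a i).testBit j then 1 else 0) * x i =
          (if j = δ - 1 then b / 2 ^ (δ - 1)
            else if b.testBit j then 1 else 0) +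
            2 * (if j = δ - 1 then 0 else y j) := by
  obtain ⟨m, rfl⟩ : ∃ m, δ = m + 1 := ⟨δ - 1, by omega⟩
  have ha : ∀ i ∈ univ, a i < 2 ^ (m + 1) := fun i _ => by
    have := hδ ▸ Nat.le_pow_clog one_lt_two (1 + univ.sup a)
    have := le_sup (f := a) (mem_univ i)
    omega
  have hbit (c j : ℕ) : (if c.testBit j then 1 else 0) = c / 2 ^ j % 2 := by
    rw [← Nat.toNat_testBit]
    cases c.testBit j <;> rfl
  simp only [hbit, Nat.add_sub_cancel]
  rw [sum_mul_eq_sum_two_pow_mul_sum_bit_mul univ a x ha, ← zero_add (∑ j ∈ range (m + 1), _),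
    ← exists_carry_chain_iff]
  -- The lemma indexes a carry by the column it enters, the statement by the column it leaves.
  constructor
  · rintro ⟨y, hy₀, hy, hm⟩
    refine ⟨fun j => y (j + 1), fun j hj => ?_⟩
    have hcarry_in : (if j = 0 then 0 else y (j - 1 + 1)) = y j := by
      split_ifs with h
      · rw [h, hy₀]
      · rw [Nat.sub_add_cancel (Nat.pos_of_ne_zero h)]
    rw [hcarry_in]
    split_ifs with h
    · rw [h, mul_zero, add_zero, hm]
    · exact hy j (by omega)
  · rintro ⟨y, hy⟩
    refine ⟨fun j => if j = 0 then 0 else y (j - 1), rfl, fun j hj => ?_, ?_⟩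
    · simpa [hj.ne] using hy j (by omega)
    · simpa using hy m (by omega)
end

section
/- If A is an integer matrix with exactly one row, then every element of the Graver basis of A has ℓ_1-norm at most 2‖A‖_∞ + 1. -/
def SignCompat {n : Type*} (a b : n → ℤ) : Prop := ∀ i, 0 ≤ a i * b i

def ConformalLE {n : Type*} (a b : n → ℤ) : Prop :=
  SignCompat a b ∧ ∀ i, |a i| ≤ |b i|

def GraverBasis {k n : Type*} [Fintype n] (A : Matrix k n ℤ) : Set (n → ℤ) :=
  {u | u ≠ 0 ∧ A.mulVec u = 0 ∧
    ∀ v : n → ℤ, v ≠ 0 → A.mulVec v = 0 → ConformalLE v u → v = u}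

/-!
Split `u` into its `‖u‖₁` unit steps `sign(uᵢ) eᵢ`. Each step changes the value of the row `a`
by at most `‖a‖_∞`, and all of them together change it by `a · u = 0`. Taking the steps in a greedy
order (always one that moves the running value towards `0`) keeps every partial value in
`[-‖a‖_∞, ‖a‖_∞]`. If `‖u‖₁ ≥ 2‖a‖_∞ + 2`, two of the partial values after at least one step
coincide, and the steps in between sum to a nonzero conformal summand of `u` in `ker a` other than
`u` itself, contradicting the `⊑`-minimality of `u`.
-/

section ZeroSum

variable {α : Type*} (c : α → ℤ)

theorem Multiset.sum_map_eq_sum_count [DecidableEq α] [Fintype α] (s : Multiset α) :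
    (s.map c).sum = ∑ i, (s.count i : ℤ) * c i := by
  rw [Finset.sum_multiset_map_count]
  refine Finset.sum_subset (Finset.subset_univ _) fun i _ hi => ?_
  simp [Multiset.count_eq_zero.2 (by simpa using hi)]

theorem Multiset.exists_mem_abs_add_le {m : Multiset α} (hm : m ≠ 0) {M s : ℤ}
    (hc : ∀ x ∈ m, |c x| ≤ M) (hs : |s| ≤ M) (hsum : s + (m.map c).sum = 0) :
    ∃ x ∈ m, |s + c x| ≤ M := by
  rcases le_total s 0 with hs0 | hs0
  · obtain ⟨x, hx, hcx⟩ : ∃ x ∈ m, 0 ≤ c x := by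
      by_contra! hneg
      have := Multiset.sum_lt_sum_of_nonempty hm hneg
      simp only [Multiset.map_const', Multiset.sum_replicate, smul_zero] at this
      omega
    refine ⟨x, hx, abs_le.2 ⟨?_, ?_⟩⟩ <;> linarith [abs_le.1 hs, abs_le.1 (hc x hx)]
  · obtain ⟨x, hx, hcx⟩ : ∃ x ∈ m, c x ≤ 0 := by
      by_contra! hpos
      have := Multiset.sum_lt_sum_of_nonempty hm hpos
      simp only [Multiset.map_const', Multiset.sum_replicate, smul_zero] at this
      omega
    refine ⟨x, hx, abs_le.2 ⟨?_, ?_⟩⟩ <;> linarith [abs_le.1 hs, abs_le.1 (hc x hx)]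

theorem Multiset.exists_list_abs_add_prefix_sum_le [DecidableEq α] {M : ℤ} (m : Multiset α)
    (s : ℤ) (hc : ∀ x ∈ m, |c x| ≤ M) (hs : |s| ≤ M) (hsum : s + (m.map c).sum = 0) :
    ∃ L : List α, (L : Multiset α) = m ∧ ∀ p, |s + ((L.take p).map c).sum| ≤ M := by
  induction hN : Multiset.card m generalizing m s with
  | zero =>
    exact ⟨[], (Multiset.card_eq_zero.1 hN).symm, fun p => by simpa using hs⟩
  | succ N ih =>
    obtain ⟨x, hx, hxs⟩ := m.exists_mem_abs_add_le c (Multiset.card_pos.1 (by omega)) hc hs hsum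
    obtain ⟨L, hL, hprefix⟩ := ih (m.erase x) (s + c x)
      (fun y hy => hc y (Multiset.mem_of_mem_erase hy)) hxs
      (by rw [add_assoc, Multiset.sum_map_erase hx, hsum])
      (by rw [Multiset.card_erase_of_mem hx, hN]; rfl)
    refine ⟨x :: L, by rw [← Multiset.cons_coe, hL, Multiset.cons_erase hx], ?_⟩
    rintro (_ | p)
    · simpa using hs
    · simpa [add_assoc] using hprefix p

theorem exists_lt_eq_of_forall_abs_le {M N : ℕ} (hN : 2 * M + 1 < N) (S : ℕ → ℤ)
    (hS : ∀ p, |S p| ≤ M) : ∃ p q, 0 < p ∧ p < q ∧ q ≤ N ∧ S p = S q := by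
  obtain ⟨p, hp, q, hq, hpq, heq⟩ := Finset.exists_ne_map_eq_of_card_lt_of_maps_to
    (s := Finset.Icc 1 N) (t := Finset.Icc (-(M : ℤ)) M) (f := S)
    (by simp only [Int.card_Icc, Nat.card_Icc]; omega)
    (fun p _ => by simpa [← abs_le] using hS p)
  rw [Finset.mem_Icc] at hp hq
  rcases hpq.lt_or_gt with h | h
  · exact ⟨p, q, by omega, h, hq.2, heq⟩
  · exact ⟨q, p, by omega, h, hp.2, heq.symm⟩

theorem Multiset.exists_zero_sum_of_two_mul_add_one_lt_card [DecidableEq α] {M : ℕ}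
    (m : Multiset α) (hc : ∀ x ∈ m, |c x| ≤ M) (hsum : (m.map c).sum = 0)
    (hcard : 2 * M + 1 < Multiset.card m) :
    ∃ s ≤ m, s ≠ 0 ∧ s ≠ m ∧ (s.map c).sum = 0 := by
  obtain ⟨L, rfl, hprefix⟩ := m.exists_list_abs_add_prefix_sum_le c 0 hc (by simp) (by simpa)
  simp only [zero_add] at hprefix
  obtain ⟨p, q, hp, hpq, hqL, heq⟩ := exists_lt_eq_of_forall_abs_le hcard _ hprefix
  set P : Multiset α := ↑(L.take p)
  set Q : Multiset α := ↑(L.take q)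
  have hPQ : P ≤ Q := Multiset.coe_le.2 (List.take_sublist_take_left hpq.le).subperm
  have hcard_sub : Multiset.card (Q - P) = q - p := by
    rw [Multiset.card_sub hPQ]
    simp only [P, Q, Multiset.coe_card, List.length_take]
    simp only [Multiset.coe_card] at hqL
    omega
  have hsum_sub : ((Q - P).map c).sum + (P.map c).sum = (Q.map c).sum := by
    rw [← Multiset.sum_add, ← Multiset.map_add, tsub_add_cancel_of_le hPQ]
  have hPQ_sum : (P.map c).sum = (Q.map c).sum := by simpa [P, Q] using heq
  refine ⟨Q - P, tsub_le_self.trans (Multiset.coe_le.2 (List.take_sublist _ _).subperm),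
    fun h => ?_, fun h => ?_, ?_⟩
  · simp only [h, Multiset.card_zero] at hcard_sub
    omega
  · simp only [h, Multiset.coe_card] at hcard_sub
    simp only [Multiset.coe_card] at hqL
    omega
  · rwa [hPQ_sum, add_eq_right] at hsum_sub

end ZeroSum

theorem Int.abs_sign_le_one (z : ℤ) : |z.sign| ≤ 1 := by
  rcases z.sign_trichotomy with h | h | h <;> simp [h]

section UnitSteps

variable {n : Type*} [Fintype n] (u : n → ℤ)

/-- `u` as a multiset of unit steps `sign(uᵢ) eᵢ`, recorded by their indices; a sub-multiset `s`
stands for the conformal summand `stepVec u s` of `u`. -/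
def unitSteps : Multiset n := ∑ i, Multiset.replicate (u i).natAbs i

theorem card_unitSteps : (Multiset.card (unitSteps u) : ℤ) = ∑ i, |u i| := by
  simp [unitSteps, Multiset.card_sum]

variable [DecidableEq n]

def stepVec (s : Multiset n) : n → ℤ := fun i => s.count i * (u i).sign

theorem count_unitSteps (i : n) : (unitSteps u).count i = (u i).natAbs := by
  simp [unitSteps, Multiset.count_sum', Multiset.count_replicate]

theorem stepVec_unitSteps : stepVec u (unitSteps u) = u := by
  ext i
  rw [stepVec, count_unitSteps, mul_comm, Int.sign_mul_natAbs]

theorem conformalLE_stepVec {s : Multiset n} (hs : s ≤ unitSteps u) :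
    ConformalLE (stepVec u s) u := by
  refine ⟨fun i => ?_, fun i => ?_⟩
  · rw [stepVec, mul_assoc, Int.sign_mul_self_eq_abs]
    positivity
  · have hcount : (s.count i : ℤ) ≤ |u i| := by
      rw [Int.abs_eq_natAbs, ← count_unitSteps]
      exact_mod_cast Multiset.count_le_of_le i hs
    calc |stepVec u s i| = s.count i * |(u i).sign| := by
          rw [stepVec, abs_mul, Nat.abs_cast]
      _ ≤ s.count i * 1 := by gcongr; exact Int.abs_sign_le_one _
      _ ≤ |u i| := by rwa [mul_one]

theorem stepVec_inj {s t : Multiset n} (hs : s ≤ unitSteps u) (ht : t ≤ unitSteps u) :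
    stepVec u s = stepVec u t ↔ s = t := by
  refine ⟨fun hst => Multiset.ext.2 fun i => ?_, congrArg _⟩
  by_cases hui : u i = 0
  · have hs0 := Multiset.count_le_of_le i hs
    have ht0 := Multiset.count_le_of_le i ht
    rw [count_unitSteps, hui, Int.natAbs_zero] at hs0 ht0
    omega
  · have := congrFun hst i
    simp only [stepVec] at this
    exact_mod_cast mul_right_cancel₀ (mt Int.sign_eq_zero_iff_zero.1 hui) this

theorem mulVec_stepVec {k : Type*} (A : Matrix k n ℤ) (s : Multiset n) (j : k) :
    A.mulVec (stepVec u s) j = (s.map fun i => A j i * (u i).sign).sum := by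
  rw [Multiset.sum_map_eq_sum_count]
  refine Finset.sum_congr rfl fun i _ => ?_
  rw [stepVec]
  ring

end UnitSteps

/-- if A has exactly one row, every Graver basis element has
ℓ₁-norm at most 2‖A‖_∞ + 1. -/
theorem graver_one_row_bound (n : ℕ) (A : Matrix (Fin 1) (Fin n) ℤ)
    (u : Fin n → ℤ) (hu : u ∈ GraverBasis A) :
    ∑ i, |u i| ≤ 2 * ((Finset.univ.sup fun i => (A 0 i).natAbs : ℕ) : ℤ) + 1 := by
  obtain ⟨-, hAu, hmin⟩ := hu
  set M := Finset.univ.sup fun i => (A 0 i).natAbs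
  set c : Fin n → ℤ := fun i => A 0 i * (u i).sign
  have hc : ∀ i, |c i| ≤ M := fun i =>
    calc |c i| ≤ |A 0 i| * 1 := by rw [abs_mul]; gcongr; exact Int.abs_sign_le_one _
      _ ≤ M := by
        rw [mul_one, Int.abs_eq_natAbs]
        exact_mod_cast Finset.le_sup (f := fun i => (A 0 i).natAbs) (Finset.mem_univ i)
  have hsum : ((unitSteps u).map c).sum = 0 := by
    rw [← mulVec_stepVec, stepVec_unitSteps, hAu, Pi.zero_apply]
  by_contra! hlarge
  obtain ⟨s, hs, hs0, hsu, hs_sum⟩ := (unitSteps u).exists_zero_sum_of_two_mul_add_one_lt_card c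
    (fun i _ => hc i) hsum (by have := card_unitSteps u; omega)
  have hAv : A.mulVec (stepVec u s) = 0 := by
    ext j
    rw [Subsingleton.elim j 0, mulVec_stepVec, hs_sum, Pi.zero_apply]
  have hv0 : stepVec u s ≠ 0 := fun h =>
    hs0 ((stepVec_inj u hs (Multiset.zero_le _)).1 (h.trans (by ext; simp [stepVec])))
  have hvu := hmin _ hv0 hAv (conformalLE_stepVec u hs)
  exact hsu ((stepVec_inj u hs le_rfl).1 (hvu.trans (stepVec_unitSteps u).symm))
end

section
/- For every integer matrix A, g_1(A) ≤ (2‖A‖_∞ + 1)^{2^{td_D(A)} − 1}, where td_D(A) is the dual treedepth of A. -/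
/-- G has treedepth at most h iff there is a forest order on V (a partial order
whose down-sets below any element are chains) of height at most h (all chains
have at most h elements) in which every edge of G joins comparable vertices. -/
def TreedepthLE {V : Type*} (G : SimpleGraph V) (h : ℕ) : Prop :=
  ∃ le : V → V → Prop,
    (∀ v, le v v) ∧
    (∀ a b c, le a b → le b c → le a c) ∧
    (∀ a b, le a b → le b a → a = b) ∧
    (∀ a b c, le a c → le b c → le a b ∨ le b a) ∧
    (∀ a b, G.Adj a b → le a b ∨ le b a) ∧
    (∀ s : Finset V, (∀ a ∈ s, ∀ b ∈ s, le a b ∨ le b a) → s.card ≤ h)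

/-- The treedepth of a graph. -/
noncomputable def treedepth {V : Type*} (G : SimpleGraph V) : ℕ :=
  sInf {h | TreedepthLE G h}

/-- The dual (constraint) graph of a matrix: vertices are the rows, two distinct
rows adjacent iff some column is nonzero in both. -/
def dualGraph {k n : Type*} (A : Matrix k n ℤ) : SimpleGraph k :=
  SimpleGraph.fromRel fun i j => ∃ col, A i col ≠ 0 ∧ A j col ≠ 0

/-!
Induction on the height `h` of a forest order on the rows in which every column meets only
pairwise comparable rows. A Graver element `u` meeting some row is supported on the columns of
a single tree, and deleting the root row `r` of that tree leaves height `h - 1`. Decompose `u` conformally into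
Graver elements of the remaining rows, each of norm at most `g` by induction. Their values in row
`r` lie in `[-‖A‖∞ g, ‖A‖∞ g]` and sum to `0`; ordered greedily, all partial sums stay in that
interval, and two equal partial sums would give a proper conformal sub-sum lying in `ker A`,
contradicting minimality of `u`. So there are at most `2‖A‖∞ g + 1` pieces, and
`‖u‖₁ ≤ (2‖A‖∞ g + 1) g ≤ (2‖A‖∞ + 1) g²`, which is the bound for height `h`.
-/

open Finset Matrix

section UIcc

variable {ι α : Type*} [AddCommGroup α] [LinearOrder α] [IsOrderedAddMonoid α]
  {s T : Finset ι} {x : ι → α} {c : α}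

theorem abs_sum_of_forall_mem_uIcc (h : ∀ t ∈ s, x t ∈ Set.uIcc 0 c) :
    |∑ t ∈ s, x t| = ∑ t ∈ s, |x t| := by
  rcases le_total 0 c with hc | hc
  · simp only [Set.uIcc_of_le hc] at h
    rw [abs_sum_of_nonneg fun t ht => (h t ht).1]
    exact sum_congr rfl fun t ht => (abs_of_nonneg (h t ht).1).symm
  · simp only [Set.uIcc_of_ge hc] at h
    rw [← abs_neg, ← sum_neg_distrib, abs_sum_of_nonneg fun t ht => neg_nonneg.2 (h t ht).2]
    exact sum_congr rfl fun t ht => (abs_of_nonpos (h t ht).2).symm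

theorem sum_mem_uIcc_of_subset (hT : T ⊆ s) (h : ∀ t ∈ s, x t ∈ Set.uIcc 0 c)
    (hs : ∑ t ∈ s, x t = c) : ∑ t ∈ T, x t ∈ Set.uIcc 0 c := by
  classical
  have hsplit : ∑ t ∈ s \ T, x t + ∑ t ∈ T, x t = c := hs ▸ sum_sdiff hT
  rcases le_total 0 c with hc | hc
  · simp only [Set.uIcc_of_le hc] at h ⊢
    refine ⟨sum_nonneg fun t ht => (h t (hT ht)).1, hsplit ▸ le_add_of_nonneg_left ?_⟩
    exact sum_nonneg fun t ht => (h t (sdiff_subset ht)).1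
  · simp only [Set.uIcc_of_ge hc] at h ⊢
    refine ⟨hsplit ▸ add_le_of_nonpos_left ?_, sum_nonpos fun t ht => (h t (hT ht)).2⟩
    exact sum_nonpos fun t ht => (h t (sdiff_subset ht)).2

theorem Int.mul_nonneg_and_abs_le_iff_mem_uIcc {x c : ℤ} :
    0 ≤ x * c ∧ |x| ≤ |c| ↔ x ∈ Set.uIcc 0 c := by
  rcases lt_trichotomy c 0 with hc | rfl | hc
  · have : 0 ≤ x * c ↔ x ≤ 0 := ⟨fun h => by nlinarith, fun h => by nlinarith⟩
    rw [this, Set.uIcc_of_ge hc.le, Set.mem_Icc]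
    grind
  · simp
  · rw [mul_nonneg_iff_of_pos_right hc, Set.uIcc_of_le hc.le, Set.mem_Icc]
    grind

end UIcc

section Conformal

variable {n : Type*}

theorem conformalLE_iff_mem_uIcc {v u : n → ℤ} :
    ConformalLE v u ↔ ∀ i, v i ∈ Set.uIcc 0 (u i) := by
  simp only [← Int.mul_nonneg_and_abs_le_iff_mem_uIcc, forall_and]
  rfl

theorem ConformalLE.refl (u : n → ℤ) : ConformalLE u u :=
  conformalLE_iff_mem_uIcc.2 fun _ => Set.right_mem_uIcc

theorem ConformalLE.trans {w v u : n → ℤ} (hwv : ConformalLE w v) (hvu : ConformalLE v u) :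
    ConformalLE w u := by
  rw [conformalLE_iff_mem_uIcc] at *
  exact fun i => Set.uIcc_subset_uIcc Set.left_mem_uIcc (hvu i) (hwv i)

theorem ConformalLE.self_sub {v u : n → ℤ} (h : ConformalLE v u) : ConformalLE (u - v) u := by
  rw [conformalLE_iff_mem_uIcc] at *
  intro i
  have := h i
  simp only [Pi.sub_apply, Set.mem_uIcc] at *
  omega

variable [Fintype n]

def l1Norm (u : n → ℤ) : ℤ := ∑ i, |u i|

theorem l1Norm_nonneg (u : n → ℤ) : 0 ≤ l1Norm u :=
  sum_nonneg fun _ _ => abs_nonneg _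

theorem l1Norm_pos {u : n → ℤ} (hu : u ≠ 0) : 0 < l1Norm u := by
  obtain ⟨i, hi⟩ := Function.ne_iff.1 hu
  exact sum_pos' (fun j _ => abs_nonneg _) ⟨i, mem_univ i, abs_pos.2 hi⟩

theorem l1Norm_sub_of_conformalLE {v u : n → ℤ} (h : ConformalLE v u) :
    l1Norm (u - v) = l1Norm u - l1Norm v := by
  rw [conformalLE_iff_mem_uIcc] at h
  simp only [l1Norm, ← sum_sub_distrib]
  refine sum_congr rfl fun i _ => ?_
  have := h i
  simp only [Pi.sub_apply, Set.mem_uIcc] at *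
  grind

theorem l1Norm_lt_of_conformalLE {v u : n → ℤ} (h : ConformalLE v u) (hne : v ≠ u) :
    l1Norm v < l1Norm u := by
  have := l1Norm_pos (sub_ne_zero.2 hne.symm)
  rw [l1Norm_sub_of_conformalLE h] at this
  linarith

variable {ι : Type*} {s T : Finset ι} {v : ι → n → ℤ} {u : n → ℤ}

theorem l1Norm_sum_of_conformalLE (h : ∀ t ∈ s, ConformalLE (v t) u) :
    l1Norm (∑ t ∈ s, v t) = ∑ t ∈ s, l1Norm (v t) := by
  simp only [l1Norm, Finset.sum_apply]
  rw [sum_comm]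
  exact sum_congr rfl fun i _ =>
    abs_sum_of_forall_mem_uIcc fun t ht => conformalLE_iff_mem_uIcc.1 (h t ht) i

omit [Fintype n] in
theorem conformalLE_sum_of_subset (hT : T ⊆ s) (h : ∀ t ∈ s, ConformalLE (v t) u)
    (hs : ∑ t ∈ s, v t = u) : ConformalLE (∑ t ∈ T, v t) u := by
  refine conformalLE_iff_mem_uIcc.2 fun i => ?_
  simp only [Finset.sum_apply]
  exact sum_mem_uIcc_of_subset hT (fun t ht => conformalLE_iff_mem_uIcc.1 (h t ht) i)
    (by rw [← Finset.sum_apply, hs])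

end Conformal

section Graver

variable {m n ι : Type*} [Fintype n] {A : Matrix m n ℤ} {u : n → ℤ}

theorem exists_mem_graverBasis_conformalLE (hu0 : u ≠ 0) (hu : A *ᵥ u = 0) :
    ∃ g ∈ GraverBasis A, ConformalLE g u := by
  obtain ⟨g, ⟨hg0, hg, hgu⟩, hmin⟩ :=
    (InvImage.wf (fun v : n → ℤ => (l1Norm v).toNat) wellFounded_lt).has_min
      {v | v ≠ 0 ∧ A *ᵥ v = 0 ∧ ConformalLE v u} ⟨u, hu0, hu, .refl u⟩
  refine ⟨g, ⟨hg0, hg, fun v hv0 hv hvg => ?_⟩, hgu⟩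
  by_contra hne
  refine hmin v ⟨hv0, hv, hvg.trans hgu⟩ ?_
  have := l1Norm_lt_of_conformalLE hvg hne
  have := l1Norm_pos hv0
  show (l1Norm v).toNat < (l1Norm g).toNat
  omega

theorem exists_sum_eq_of_mulVec_eq_zero (hu : A *ᵥ u = 0) :
    ∃ (N : ℕ) (v : Fin N → n → ℤ), ∑ t, v t = u ∧
      ∀ t, v t ∈ GraverBasis A ∧ ConformalLE (v t) u := by
  induction hN : (l1Norm u).toNat using Nat.strong_induction_on generalizing u with
  | _ N ih =>
  by_cases hu0 : u = 0
  · exact ⟨0, Fin.elim0, by simp [hu0], fun t => t.elim0⟩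
  obtain ⟨g, hg, hgu⟩ := exists_mem_graverBasis_conformalLE hu0 hu
  have hlt : (l1Norm (u - g)).toNat < N := by
    have := l1Norm_pos hg.1
    have := l1Norm_nonneg (u - g)
    rw [l1Norm_sub_of_conformalLE hgu] at *
    omega
  obtain ⟨N', v, hsum, hv⟩ :=
    ih _ hlt (u := u - g) (by rw [Matrix.mulVec_sub, hu, hg.2.1, sub_zero]) rfl
  refine ⟨N' + 1, Fin.cons g v, by rw [Fin.sum_cons, hsum, add_sub_cancel], ?_⟩
  refine Fin.forall_fin_succ.2 ⟨by simpa using ⟨hg, hgu⟩, fun t => ?_⟩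
  simpa using ⟨(hv t).1, (hv t).2.trans hgu.self_sub⟩

theorem eq_of_mulVec_sum_eq_zero (hu : u ∈ GraverBasis A) {s T : Finset ι} {v : ι → n → ℤ}
    (hsum : ∑ t ∈ s, v t = u) (hv0 : ∀ t ∈ s, v t ≠ 0) (hvu : ∀ t ∈ s, ConformalLE (v t) u)
    (hT : T ⊆ s) (hTne : T.Nonempty) (hker : A *ᵥ ∑ t ∈ T, v t = 0) : T = s := by
  have hl1 : l1Norm (∑ t ∈ T, v t) = ∑ t ∈ T, l1Norm (v t) :=
    l1Norm_sum_of_conformalLE fun t ht => hvu t (hT ht)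
  have hw0 : ∑ t ∈ T, v t ≠ 0 := by
    intro h0
    have := sum_pos (fun t ht => l1Norm_pos (hv0 t (hT ht))) hTne
    rw [← hl1, h0] at this
    simp [l1Norm] at this
  have hwu := hu.2.2 _ hw0 hker (conformalLE_sum_of_subset hT hvu hsum)
  by_contra hne
  obtain ⟨t, hts, htT⟩ := not_subset.1 (fun h => hne (hT.antisymm h))
  have := sum_lt_sum_of_subset hT hts htT (l1Norm_pos (hv0 t hts))
    fun t _ _ => (l1Norm_nonneg _)
  rw [← hl1, ← l1Norm_sum_of_conformalLE hvu, hwu, hsum] at this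
  exact this.false

theorem l1Norm_eq_one_of_mem_graverBasis (hu : u ∈ GraverBasis A) {j : n} (hj : u j ≠ 0)
    (hA : ∀ i, A i j = 0) : l1Norm u = 1 := by
  classical
  have hsign : (u j).sign ∈ Set.uIcc 0 (u j) := by
    rcases hj.lt_or_gt with h | h
    · simp [Int.sign_eq_neg_one_of_neg h, Set.mem_uIcc]; omega
    · simp [Int.sign_eq_one_of_pos h, Set.mem_uIcc]; omega
  have hsingle : Pi.single j (u j).sign = u := by
    refine hu.2.2 _ ?_ ?_ (conformalLE_iff_mem_uIcc.2 fun i => ?_)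
    · simpa [Int.sign_eq_zero_iff_zero] using hj
    · ext i
      simp [Matrix.mulVec_single, hA]
    · rcases eq_or_ne i j with rfl | hij
      · simpa using hsign
      · simp [hij]
  rw [← hsingle, l1Norm, sum_eq_single j (fun i _ hij => by simp [hij]) (by simp)]
  simpa using Int.abs_sign_of_ne_zero hj

/- `C` is a union of components of the dual graph. The restriction of `u` to the columns meeting
no row outside `C` is again in the kernel and conformally below `u`, hence equal to `u`. -/
theorem mem_of_mem_graverBasis_of_closed (hu : u ∈ GraverBasis A) {C : Set m}
    (hC : ∀ i i' j, i ∈ C → A i j ≠ 0 → A i' j ≠ 0 → i' ∈ C) {i₀ : m} {j₀ : n}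
    (hi₀ : i₀ ∈ C) (hA₀ : A i₀ j₀ ≠ 0) (hu₀ : u j₀ ≠ 0) {i : m} {j : n} (huj : u j ≠ 0)
    (hAij : A i j ≠ 0) : i ∈ C := by
  set J : Set n := {j | ∀ i, A i j ≠ 0 → i ∈ C}
  have hoff : ∀ i ∈ C, ∀ j ∉ J, A i j = 0 := by
    intro i hi j hj
    simp only [J, Set.mem_ofPred_eq, not_forall] at hj
    obtain ⟨i', hi', hi'C⟩ := hj
    by_contra h
    exact hi'C (hC i i' j hi h hi')
  have hker : A *ᵥ J.indicator u = 0 := by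
    ext i
    by_cases hi : i ∈ C
    · rw [← congrFun hu.2.1 i]
      refine sum_congr rfl fun j _ => ?_
      by_cases hj : j ∈ J
      · simp [hj]
      · simp [hj, hoff i hi j hj]
    · refine sum_eq_zero fun j _ => ?_
      by_cases hj : j ∈ J
      · have : A i j = 0 := by
          by_contra h
          exact hi (hj i h)
        simp [this]
      · simp [hj]
  have hj₀ : j₀ ∈ J := fun i hi => hC i₀ i j₀ hi₀ hA₀ hi
  have hne : J.indicator u ≠ 0 := fun h => hu₀ (by simpa [hj₀] using congrFun h j₀)
  have hconf : ConformalLE (J.indicator u) u := conformalLE_iff_mem_uIcc.2 fun j => by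
    by_cases hj : j ∈ J
    · simp only [Set.indicator_of_mem hj, Set.right_mem_uIcc]
    · simp only [Set.indicator_of_notMem hj, Set.left_mem_uIcc]
  have heq := hu.2.2 _ hne hker hconf
  have hjJ : j ∈ J := by
    by_contra hj
    rw [← heq, Set.indicator_of_notMem hj] at huj
    exact huj rfl
  exact hjJ i hAij

end Graver

section ZeroSubsum

variable {ι : Type*} [DecidableEq ι] {s : Finset ι} {a : ι → ℤ} {B : ℤ}

theorem exists_mem_sdiff_abs_sum_add_le (ha : ∀ t ∈ s, |a t| ≤ B) (hs : ∑ t ∈ s, a t = 0)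
    {T : Finset ι} (hT : T ⊂ s) (hTB : |∑ t ∈ T, a t| ≤ B) :
    ∃ x ∈ s \ T, |∑ t ∈ T, a t + a x| ≤ B := by
  have hrest : ∑ t ∈ s \ T, a t = -∑ t ∈ T, a t := by
    rw [eq_neg_iff_add_eq_zero, sum_sdiff hT.subset, hs]
  have hB : ∀ x ∈ s \ T, |a x| ≤ B := fun x hx => ha x (sdiff_subset hx)
  rw [abs_le] at hTB
  rcases lt_trichotomy (∑ t ∈ T, a t) 0 with hneg | hzero | hpos
  · obtain ⟨x, hx, hax⟩ := exists_lt_of_sum_lt (s := s \ T) (f := fun _ => 0) (g := a)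
      (by rw [sum_const_zero, hrest]; omega)
    have := abs_le.1 (hB x hx)
    exact ⟨x, hx, abs_le.2 ⟨by omega, by omega⟩⟩
  · obtain ⟨x, hx⟩ := sdiff_nonempty.2 (not_subset_of_ssubset hT)
    exact ⟨x, hx, by simpa [hzero] using hB x hx⟩
  · obtain ⟨x, hx, hax⟩ := exists_lt_of_sum_lt (s := s \ T) (f := a) (g := fun _ => 0)
      (by rw [sum_const_zero, hrest]; omega)
    have := abs_le.1 (hB x hx)
    exact ⟨x, hx, abs_le.2 ⟨by omega, by omega⟩⟩

theorem exists_chain_abs_sum_le (hB0 : 0 ≤ B) (ha : ∀ t ∈ s, |a t| ≤ B)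
    (hs : ∑ t ∈ s, a t = 0) :
    ∃ P : ℕ → Finset ι, Monotone P ∧
      ∀ p ≤ s.card, P p ⊆ s ∧ (P p).card = p ∧ |∑ t ∈ P p, a t| ≤ B := by
  have step : ∀ T : Finset ι, ∃ T', T ⊆ T' ∧ (T ⊂ s → |∑ t ∈ T, a t| ≤ B →
      T' ⊆ s ∧ T'.card = T.card + 1 ∧ |∑ t ∈ T', a t| ≤ B) := by
    intro T
    by_cases hT : T ⊂ s ∧ |∑ t ∈ T, a t| ≤ B
    · obtain ⟨x, hx, hxB⟩ := exists_mem_sdiff_abs_sum_add_le ha hs hT.1 hT.2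
      rw [mem_sdiff] at hx
      refine ⟨insert x T, subset_insert x T, fun _ _ => ⟨insert_subset hx.1 hT.1.subset,
        card_insert_of_notMem hx.2, ?_⟩⟩
      rwa [sum_insert hx.2, add_comm]
    · exact ⟨T, subset_rfl, fun h h' => absurd ⟨h, h'⟩ hT⟩
  choose grow hgrow using step
  refine ⟨fun p => grow^[p] ∅, monotone_nat_of_le_succ fun p => ?_, fun p => ?_⟩
  · rw [Function.iterate_succ_apply']
    exact (hgrow _).1
  dsimp only
  induction p with
  | zero => simpa using hB0
  | succ p ih =>
    intro hp
    obtain ⟨hPs, hPcard, hPB⟩ := ih (by omega)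
    have hssub : grow^[p] ∅ ⊂ s := ssubset_of_subset_of_ne hPs fun h => by
      rw [h] at hPcard
      omega
    obtain ⟨hs', hcard', hB'⟩ := (hgrow _).2 hssub hPB
    rw [Function.iterate_succ_apply']
    exact ⟨hs', hcard'.trans (by rw [hPcard]), hB'⟩

theorem exists_ssubset_nonempty_sum_eq_zero (hB0 : 0 ≤ B) (ha : ∀ t ∈ s, |a t| ≤ B)
    (hs : ∑ t ∈ s, a t = 0) (hcard : 2 * B + 1 < s.card) :
    ∃ T ⊂ s, T.Nonempty ∧ ∑ t ∈ T, a t = 0 := by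
  obtain ⟨P, hmono, hP⟩ := exists_chain_abs_sum_le hB0 ha hs
  have hmaps : Set.MapsTo (fun p => ∑ t ∈ P p, a t) (range s.card) (Icc (-B) B) :=
    fun p hp => mem_Icc.2 (abs_le.1 (hP p (mem_range.1 hp).le).2.2)
  obtain ⟨p, hp, q, hq, hpq, heq⟩ := exists_ne_map_eq_of_card_lt_of_maps_to
    (by rw [Int.card_Icc, card_range]; omega) hmaps
  wlog hlt : p < q generalizing p q
  · exact this q hq p hp hpq.symm heq.symm (by omega)
  rw [mem_range] at hp hq
  obtain ⟨hPq, hPqcard, -⟩ := hP q hq.le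
  have hPpq := hmono hlt.le
  have hcard' : (P q \ P p).card = q - p := by
    rw [card_sdiff_of_subset hPpq, hPqcard, (hP p hp.le).2.1]
  refine ⟨P q \ P p, ssubset_of_subset_of_ne (sdiff_subset.trans hPq) fun h => ?_,
    card_pos.1 (by omega), ?_⟩
  · rw [h] at hcard'
    omega
  · have := sum_sdiff hPpq (f := a)
    omega

end ZeroSubsum

section AddRow

variable {m m' n ι : Type*} [Fintype n] {A : Matrix m n ℤ} {u : n → ℤ}

theorem abs_mulVec_apply_le {M : ℤ} {i : m} (hM : ∀ j, |A i j| ≤ M) (v : n → ℤ) :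
    |(A *ᵥ v) i| ≤ M * l1Norm v := by
  calc |(A *ᵥ v) i| ≤ ∑ j, |A i j * v j| := abs_sum_le_sum_abs _ _
    _ ≤ ∑ j, M * |v j| := sum_le_sum fun j _ => by
        rw [abs_mul]
        exact mul_le_mul_of_nonneg_right (hM j) (abs_nonneg _)
    _ = M * l1Norm v := (mul_sum _ _ _).symm

theorem ConformalLE.mulVec_apply_eq_zero {v : n → ℤ} (hvu : ConformalLE v u) {i : m}
    (hA : ∀ j, u j ≠ 0 → A i j = 0) : (A *ᵥ v) i = 0 := by
  refine sum_eq_zero fun j _ => ?_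
  by_cases huj : u j = 0
  · have := conformalLE_iff_mem_uIcc.1 hvu j
    simp_all
  · simp [hA j huj]

theorem card_le_of_sum_eq_mem_graverBasis (hu : u ∈ GraverBasis A) {s : Finset ι}
    {v : ι → n → ℤ} (hsum : ∑ t ∈ s, v t = u) (hv0 : ∀ t ∈ s, v t ≠ 0)
    (hvu : ∀ t ∈ s, ConformalLE (v t) u) {r : m} (hker : ∀ t ∈ s, ∀ i ≠ r, (A *ᵥ v t) i = 0)
    {B : ℤ} (hB : ∀ t ∈ s, |(A *ᵥ v t) r| ≤ B) : (s.card : ℤ) ≤ 2 * B + 1 := by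
  classical
  obtain ⟨t₀, ht₀⟩ : s.Nonempty := nonempty_of_sum_ne_zero (hsum ▸ hu.1)
  have hr : ∑ t ∈ s, (A *ᵥ v t) r = 0 := by
    rw [← Finset.sum_apply, ← mulVec_sum, hsum, hu.2.1, Pi.zero_apply]
  by_contra! hcard
  obtain ⟨T, hTs, hTne, hT⟩ := exists_ssubset_nonempty_sum_eq_zero
    ((abs_nonneg _).trans (hB t₀ ht₀)) hB hr hcard
  refine hTs.ne (eq_of_mulVec_sum_eq_zero hu hsum hv0 hvu hTs.subset hTne ?_)
  ext i
  rw [mulVec_sum, Finset.sum_apply, Pi.zero_apply]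
  rcases eq_or_ne i r with rfl | hi
  · exact hT
  · exact sum_eq_zero fun t ht => hker t (hTs.subset ht) i hi

theorem l1Norm_le_of_mem_graverBasis_of_row (A' : Matrix m' n ℤ) (hu : u ∈ GraverBasis A)
    (r : m) (hker' : A' *ᵥ u = 0)
    (hrows : ∀ v, ConformalLE v u → A' *ᵥ v = 0 → ∀ i ≠ r, (A *ᵥ v) i = 0)
    {M : ℕ} (hM : ∀ j, |A r j| ≤ M) {g : ℤ} (hg0 : 0 ≤ g)
    (hg : ∀ v ∈ GraverBasis A', l1Norm v ≤ g) :
    l1Norm u ≤ (2 * (M * g) + 1) * g := by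
  obtain ⟨N, v, hsum, hv⟩ := exists_sum_eq_of_mulVec_eq_zero hker'
  have hN := card_le_of_sum_eq_mem_graverBasis hu (s := univ) hsum (fun t _ => (hv t).1.1)
    (fun t _ => (hv t).2) (fun t _ => hrows _ (hv t).2 (hv t).1.2.1)
    (B := M * g) fun t _ => (abs_mulVec_apply_le hM _).trans <|
      mul_le_mul_of_nonneg_left (hg _ (hv t).1) (Nat.cast_nonneg M)
  calc l1Norm u = ∑ t, l1Norm (v t) := by
        rw [← l1Norm_sum_of_conformalLE fun t _ => (hv t).2, hsum]
    _ ≤ ∑ _t, g := sum_le_sum fun t _ => hg _ (hv t).1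
    _ = N * g := by simp
    _ ≤ (2 * (M * g) + 1) * g := mul_le_mul_of_nonneg_right (by simpa using hN) hg0

end AddRow

section Forest

variable {m : Type*} [PartialOrder m]

theorem IsMin.le_of_le_of_comparable (hforest : ∀ c : m, IsChain (· ≤ ·) (Set.Iic c))
    {r i i' : m} (hr : IsMin r) (hri : r ≤ i) (hii' : i ≤ i' ∨ i' ≤ i) : r ≤ i' := by
  rcases hii' with h | h
  · exact hri.trans h
  · rcases (hforest i).total hri h with h' | h'
    · exact h'
    · exact hr h'

theorem card_le_of_isChain_Ioi {r : m} {h : ℕ}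
    (hheight : ∀ s : Finset m, IsChain (· ≤ ·) (s : Set m) → s.card ≤ h + 1)
    (s : Finset (Set.Ioi r)) (hs : IsChain (· ≤ ·) (s : Set (Set.Ioi r))) : s.card ≤ h := by
  classical
  set φ := OrderEmbedding.subtype (· ∈ Set.Ioi r)
  have hr : r ∉ s.map φ.toEmbedding := fun hr => by
    obtain ⟨x, -, hx⟩ := mem_map.1 hr
    exact (x.2 : r < x).ne' hx
  have hchain : IsChain (· ≤ ·) ((insert r (s.map φ.toEmbedding) : Finset m) : Set m) := by
    rw [coe_insert, coe_map]
    refine (hs.image φ).insert fun b hb _ => ?_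
    obtain ⟨x, -, rfl⟩ := hb
    exact Or.inl (x.2 : r < x).le
  have := hheight _ hchain
  rwa [card_insert_of_notMem hr, card_map, add_le_add_iff_right] at this

end Forest

theorem pow_two_pow_succ_sub_one {M : Type*} [Monoid M] (c : M) (h : ℕ) :
    c ^ (2 ^ (h + 1) - 1) = c * (c ^ (2 ^ h - 1)) ^ 2 := by
  rw [← pow_mul, ← pow_succ']
  congr 1
  have := Nat.one_le_two_pow (n := h)
  rw [pow_succ]
  omega

theorem l1Norm_le_of_forest {m n : Type*} [Fintype n] [PartialOrder m] [Finite m]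
    (A : Matrix m n ℤ) {M : ℕ} (hM : ∀ i j, |A i j| ≤ M)
    (hforest : ∀ c : m, IsChain (· ≤ ·) (Set.Iic c))
    (hcol : ∀ i i' j, A i j ≠ 0 → A i' j ≠ 0 → i ≤ i' ∨ i' ≤ i) {h : ℕ}
    (hheight : ∀ s : Finset m, IsChain (· ≤ ·) (s : Set m) → s.card ≤ h) :
    ∀ u ∈ GraverBasis A, l1Norm u ≤ ((2 * M + 1 : ℕ) : ℤ) ^ (2 ^ h - 1) := by
  induction h generalizing m with
  | zero =>
    intro u hu
    obtain ⟨j, hj⟩ := Function.ne_iff.1 hu.1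
    have : IsEmpty m := ⟨fun i => by simpa using hheight {i} (by simp)⟩
    simp [l1Norm_eq_one_of_mem_graverBasis hu hj isEmptyElim]
  | succ h ih =>
    intro u hu
    by_cases hzero : ∃ j, u j ≠ 0 ∧ ∀ i, A i j = 0
    · obtain ⟨j, hj, hA⟩ := hzero
      rw [l1Norm_eq_one_of_mem_graverBasis hu hj hA]
      exact one_le_pow₀ (by omega)
    push Not at hzero
    obtain ⟨j₀, hj₀⟩ := Function.ne_iff.1 hu.1
    obtain ⟨i₀, hi₀⟩ := hzero j₀ hj₀
    obtain ⟨r, hri₀, hr⟩ := Finite.exists_le_minimal (p := fun _ : m => True) (a := i₀) trivial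
    rw [minimal_true] at hr
    have hsupp : ∀ j, u j ≠ 0 → ∀ i, A i j ≠ 0 → r ≤ i := fun j huj i hAij =>
      mem_of_mem_graverBasis_of_closed hu (C := Set.Ici r)
        (fun i i' j hi h h' => hr.le_of_le_of_comparable hforest hi (hcol i i' j h h'))
        hri₀ hi₀ hj₀ huj hAij
    set A' : Matrix (Set.Ioi r) n ℤ := A.submatrix Subtype.val id
    set g : ℤ := ((2 * M + 1 : ℕ) : ℤ) ^ (2 ^ h - 1)
    have hg := ih A' (fun i j => hM i j)
      (fun c a ha b hb hab => hforest c ha hb (Subtype.val_injective.ne hab))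
      (fun i i' j => hcol i i' j) (card_le_of_isChain_Ioi hheight)
    have hrows : ∀ v, ConformalLE v u → A' *ᵥ v = 0 → ∀ i ≠ r, (A *ᵥ v) i = 0 := by
      intro v hvu hv i hi
      by_cases hri : r < i
      · exact congrFun hv ⟨i, hri⟩
      · refine hvu.mulVec_apply_eq_zero fun j huj => ?_
        by_contra hA
        exact hri ((hsupp j huj i hA).lt_of_ne' hi)
    have hg1 : 1 ≤ g := one_le_pow₀ (by omega)
    calc l1Norm u ≤ (2 * (M * g) + 1) * g :=
          l1Norm_le_of_mem_graverBasis_of_row A' hu r (funext fun i => congrFun hu.2.1 i) hrows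
            (hM r) (by omega) hg
      _ ≤ ((2 * M + 1 : ℕ) : ℤ) * g ^ 2 := by push_cast; nlinarith
      _ = _ := (pow_two_pow_succ_sub_one _ h).symm

theorem treedepthLE_treedepth {V : Type*} [Finite V] (G : SimpleGraph V) :
    TreedepthLE G (treedepth G) := by
  let := IsWellOrder.linearOrder (WellOrderingRel (α := V))
  have := Fintype.ofFinite V
  exact Nat.sInf_mem (s := {h | TreedepthLE G h}) ⟨Fintype.card V, (· ≤ ·), le_refl,
    fun _ _ _ => le_trans, fun _ _ => le_antisymm, fun a b _ _ _ => le_total a b,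
    fun a b _ => le_total a b, fun s _ => card_le_univ s⟩

/-- for every integer matrix A,
g₁(A) ≤ (2‖A‖_∞ + 1)^(2^{td_D(A)} − 1). -/
theorem graver_bound_dual_treedepth (k n : ℕ) (A : Matrix (Fin k) (Fin n) ℤ) :
    ∀ u ∈ GraverBasis A,
      ∑ i, |u i| ≤
        ((2 * (Finset.univ.sup fun p : Fin k × Fin n => (A p.1 p.2).natAbs) + 1 : ℕ) : ℤ) ^
          (2 ^ treedepth (dualGraph A) - 1) := by
  obtain ⟨le, hrefl, htrans, hanti, hdown, hedge, hheight⟩ := treedepthLE_treedepth (dualGraph A)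
  -- the witness forest order, in place of the usual order on `Fin k`
  let : PartialOrder (Fin k) :=
    { le := le, lt := fun a b => le a b ∧ ¬le b a, le_refl := hrefl, le_trans := htrans,
      le_antisymm := hanti, lt_iff_le_not_ge := fun _ _ => Iff.rfl }
  refine l1Norm_le_of_forest A (fun i j => ?_) (fun c a ha b hb _ => hdown a b c ha hb)
    (fun i i' j hi hi' => ?_) fun s hs => hheight s fun a ha b hb => hs.total ha hb
  · rw [Int.abs_eq_natAbs, Nat.cast_le]
    exact le_sup (f := fun p : Fin k × Fin n => (A p.1 p.2).natAbs) (mem_univ (i, j))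
  · rcases eq_or_ne i i' with rfl | hne
    · exact Or.inl (hrefl i)
    · exact hedge i i' (SimpleGraph.fromRel_adj _ _ _ |>.2 ⟨hne, Or.inl ⟨j, hi, hi'⟩⟩)
end

section
/- The treedepth of the path graph on n vertices equals ⌈log(n+1)⌉, where log is the binary logarithm. -/
/-!
Number the vertices `1, …, n` and order each vertex below the vertices of its subtree in the
binary search tree on the positive integers, where `x` sits at height `v₂ x`. Edges join
comparable vertices, and the vertices of a chain have distinct 2-adic valuations, all below
`⌈log₂ (n + 1)⌉`.

Conversely, in a forest order of a path segment some vertex lies below every other one: extend the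
segment one vertex at a time, the new vertex being comparable to the old root because it is
comparable to its neighbour. Deleting this root leaves two segments, each of height one less, so a
segment of height `h` has fewer than `2 ^ h` vertices.
-/

structure IsForestPreorder {α : Type*} (r : α → α → Prop) : Prop where
  refl : ∀ a, r a a
  trans : ∀ a b c, r a b → r b c → r a c
  total_of_le : ∀ a b c, r a c → r b c → r a b ∨ r b a

theorem IsForestPreorder.comap {α β : Type*} {r : α → α → Prop} (hr : IsForestPreorder r)
    (f : β → α) : IsForestPreorder (fun x y => r (f x) (f y)) where
  refl a := hr.refl (f a)
  trans a b c := hr.trans (f a) (f b) (f c)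
  total_of_le a b c := hr.total_of_le (f a) (f b) (f c)

theorem div_pow_eq_div_pow_of_le {p x y i j : ℕ} (h : x / p ^ i = y / p ^ i) (hij : i ≤ j) :
    x / p ^ j = y / p ^ j := by
  rw [← Nat.add_sub_cancel' hij, pow_add, ← Nat.div_div_eq_div_mul, ← Nat.div_div_eq_div_mul, h]

theorem mod_two_pow_padicValNat_succ {x : ℕ} (hx : x ≠ 0) :
    x % 2 ^ (padicValNat 2 x + 1) = 2 ^ padicValNat 2 x := by
  obtain ⟨u, hu⟩ := pow_padicValNat_dvd (p := 2) (n := x)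
  have hu_odd : u % 2 = 1 := by
    refine Nat.two_dvd_ne_zero.mp fun ⟨w, hw⟩ => pow_succ_padicValNat_not_dvd (p := 2) hx ⟨w, ?_⟩
    nth_rw 1 [hu]
    rw [hw, pow_succ, mul_assoc]
  rw [pow_succ]
  nth_rw 1 [hu]
  rw [Nat.mul_mod_mul_left, hu_odd, mul_one]

/-- For positive `b`, `DyadicLE a b` says that `b` lies in the subtree rooted at
`a = 2 ^ k * (2 * m + 1)` of the infinite binary search tree on the positive integers, which is the
open interval `(2 ^ (k + 1) * m, 2 ^ (k + 1) * (m + 1))`. -/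
def DyadicLE (a b : ℕ) : Prop :=
  padicValNat 2 b ≤ padicValNat 2 a ∧
    b / 2 ^ (padicValNat 2 a + 1) = a / 2 ^ (padicValNat 2 a + 1)

theorem DyadicLE.eq_of_padicValNat_eq {a b : ℕ} (ha : a ≠ 0) (hb : b ≠ 0) (hab : DyadicLE a b)
    (hv : padicValNat 2 a = padicValNat 2 b) : a = b := by
  rw [← Nat.div_add_mod a (2 ^ (padicValNat 2 a + 1)),
    ← Nat.div_add_mod b (2 ^ (padicValNat 2 a + 1)), hab.2, mod_two_pow_padicValNat_succ ha, hv,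
    mod_two_pow_padicValNat_succ hb]

theorem DyadicLE.antisymm {a b : ℕ} (ha : a ≠ 0) (hb : b ≠ 0) (hab : DyadicLE a b)
    (hba : DyadicLE b a) : a = b :=
  hab.eq_of_padicValNat_eq ha hb (le_antisymm hba.1 hab.1)

theorem DyadicLE.of_dyadicLE_of_padicValNat_le {a b c : ℕ} (hac : DyadicLE a c)
    (hbc : DyadicLE b c) (hv : padicValNat 2 b ≤ padicValNat 2 a) : DyadicLE a b :=
  ⟨hv, (div_pow_eq_div_pow_of_le hbc.2.symm (Nat.succ_le_succ hv)).trans hac.2⟩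

theorem isForestPreorder_dyadicLE : IsForestPreorder DyadicLE where
  refl _ := ⟨le_rfl, rfl⟩
  trans _ _ _ hab hbc := ⟨hbc.1.trans hab.1,
    (div_pow_eq_div_pow_of_le hbc.2 (Nat.succ_le_succ hab.1)).trans hab.2⟩
  total_of_le a b _ hac hbc := (le_total (padicValNat 2 b) (padicValNat 2 a)).imp
    (hac.of_dyadicLE_of_padicValNat_le hbc) (hbc.of_dyadicLE_of_padicValNat_le hac)

theorem dyadicLE_succ_or (x : ℕ) : DyadicLE x (x + 1) ∨ DyadicLE (x + 1) x := by
  rcases le_or_gt (padicValNat 2 (x + 1)) (padicValNat 2 x) with hv | hv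
  · refine Or.inl ⟨hv, Nat.succ_div_of_not_dvd fun hdvd => ?_⟩
    have := (padicValNat_dvd_iff_le (Nat.add_one_ne_zero x)).mp hdvd
    omega
  · exact Or.inr ⟨hv.le,
      (Nat.succ_div_of_not_dvd (pow_succ_padicValNat_not_dvd (Nat.add_one_ne_zero x))).symm⟩

theorem treedepthLE_pathGraph_of_lt_two_pow {n h : ℕ} (hn : n < 2 ^ h) :
    TreedepthLE (SimpleGraph.pathGraph n) h := by
  obtain ⟨refl, trans, total_of_le⟩ := isForestPreorder_dyadicLE.comap (fun i : Fin n => i.val + 1)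
  refine ⟨_, refl, trans,
    fun a b hab hba => Fin.ext (by simpa using hab.antisymm (by omega) (by omega) hba), total_of_le,
    fun a b hadj => ?_, fun s hs => ?_⟩
  · rcases SimpleGraph.pathGraph_adj.mp hadj with hab | hba
    · simpa only [← hab] using dyadicLE_succ_or (a.val + 1)
    · simpa only [← hba] using (dyadicLE_succ_or (b.val + 1)).symm
  · have hval_lt (i : Fin n) : padicValNat 2 (i.val + 1) < h := by
      have := Nat.le_of_dvd (Nat.succ_pos _) (pow_padicValNat_dvd (p := 2) (n := i.val + 1))
      exact (Nat.pow_lt_pow_iff_right one_lt_two).mp (by omega)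
    calc s.card ≤ (Finset.range h).card :=
          Finset.card_le_card_of_injOn (fun i => padicValNat 2 (i.val + 1))
            (fun i _ => Finset.mem_range.mpr (hval_lt i)) fun a ha b hb hv => Fin.ext ?_
      _ = h := Finset.card_range h
    rcases hs a ha b hb with hab | hba
    · simpa using hab.eq_of_padicValNat_eq (by omega) (by omega) hv
    · simpa using (hba.eq_of_padicValNat_eq (by omega) (by omega) hv.symm).symm

section PathSegment

variable {r : ℕ → ℕ → Prop}

theorem IsForestPreorder.exists_root_Ico (hr : IsForestPreorder r) {a b : ℕ}
    (hadj : ∀ i, a ≤ i → i + 1 < b → r i (i + 1) ∨ r (i + 1) i) (hab : a < b) :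
    ∃ ρ ∈ Finset.Ico a b, ∀ x ∈ Finset.Ico a b, r ρ x := by
  induction b, hab using Nat.le_induction with
  | base =>
    refine ⟨a, Finset.mem_Ico.mpr ⟨le_rfl, lt_add_one a⟩, fun x hx => ?_⟩
    obtain rfl : x = a := by rw [Finset.mem_Ico] at hx; omega
    exact hr.refl x
  | succ b hab ih =>
    obtain ⟨ρ, hρ, hroot⟩ := ih fun i hi hib => hadj i hi (by omega)
    have hρb : r ρ b ∨ r b ρ := by
      obtain ⟨c, rfl⟩ : ∃ c, b = c + 1 := ⟨b - 1, by omega⟩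
      have hρc : r ρ c := hroot c (Finset.mem_Ico.mpr ⟨by omega, by omega⟩)
      rcases hadj c (by omega) (by omega) with hc | hc
      · exact Or.inl (hr.trans _ _ _ hρc hc)
      · exact hr.total_of_le _ _ _ hρc hc
    have hIco : ∀ x ∈ Finset.Ico a (b + 1), x ∈ Finset.Ico a b ∨ x = b := by
      intro x hx
      simp only [Finset.mem_Ico] at hx ⊢
      omega
    rcases hρb with hρb | hbρ
    · refine ⟨ρ, Finset.Ico_subset_Ico_right b.le_succ hρ, fun x hx => ?_⟩
      rcases hIco x hx with hx | rfl
      exacts [hroot x hx, hρb]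
    · refine ⟨b, Finset.mem_Ico.mpr ⟨by omega, lt_add_one b⟩, fun x hx => ?_⟩
      rcases hIco x hx with hx | rfl
      exacts [hr.trans _ _ _ hbρ (hroot x hx), hr.refl x]

theorem IsForestPreorder.chain_card_le_of_root_notMem (hr : IsForestPreorder r)
    {S t : Finset ℕ} {ρ h : ℕ}
    (hchain : ∀ s ⊆ S, (∀ x ∈ s, ∀ y ∈ s, r x y ∨ r y x) → s.card ≤ h + 1)
    (hroot : ∀ x ∈ S, r ρ x) (hρ : ρ ∈ S) (htS : t ⊆ S) (hρt : ρ ∉ t) :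
    ∀ s ⊆ t, (∀ x ∈ s, ∀ y ∈ s, r x y ∨ r y x) → s.card ≤ h := by
  intro s hst hs
  have hinsert := hchain (insert ρ s) (Finset.insert_subset hρ (hst.trans htS)) fun x hx y hy => by
    rcases Finset.mem_insert.mp hx with hxρ | hxs <;> rcases Finset.mem_insert.mp hy with hyρ | hys
    · subst hxρ hyρ
      exact Or.inl (hr.refl _)
    · subst hxρ
      exact Or.inl (hroot y (htS (hst hys)))
    · subst hyρ
      exact Or.inr (hroot x (htS (hst hxs)))
    · exact hs x hxs y hys
  rwa [Finset.card_insert_of_notMem fun hρs => hρt (hst hρs), add_le_add_iff_right] at hinsert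

theorem IsForestPreorder.lt_add_two_pow (hr : IsForestPreorder r) {h a b : ℕ}
    (hadj : ∀ i, a ≤ i → i + 1 < b → r i (i + 1) ∨ r (i + 1) i)
    (hchain : ∀ s ⊆ Finset.Ico a b, (∀ x ∈ s, ∀ y ∈ s, r x y ∨ r y x) → s.card ≤ h) :
    b < a + 2 ^ h := by
  induction h generalizing a b with
  | zero =>
    by_contra! hab
    have := hchain {a} (by simpa using by omega) (by simpa using hr.refl a)
    simp at this
  | succ h ih =>
    rcases le_or_gt b a with hba | hab
    · have := Nat.one_le_two_pow (n := h + 1)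
      omega
    obtain ⟨ρ, hρ, hroot⟩ := hr.exists_root_Ico hadj hab
    obtain ⟨haρ, hρb⟩ := Finset.mem_Ico.mp hρ
    have hleft : ρ < a + 2 ^ h := ih (fun i hi hiρ => hadj i hi (by omega))
      (hr.chain_card_le_of_root_notMem hchain hroot hρ
        (Finset.Ico_subset_Ico_right hρb.le) Finset.right_notMem_Ico)
    have hright : b < ρ + 1 + 2 ^ h := ih (fun i hi hib => hadj i (by omega) hib)
      (hr.chain_card_le_of_root_notMem hchain hroot hρ
        (Finset.Ico_subset_Ico (by omega) le_rfl) (by simp))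
    rw [pow_succ]
    omega

end PathSegment

theorem lt_two_pow_of_treedepthLE_pathGraph {n h : ℕ}
    (hT : TreedepthLE (SimpleGraph.pathGraph n) h) : n < 2 ^ h := by
  obtain _ | m := n
  · exact Nat.two_pow_pos h
  obtain ⟨le, refl, trans, -, total_of_le, hadj, hchain⟩ := hT
  have hval {x : ℕ} (hx : x < m + 1) : (Fin.ofNat (m + 1) x : ℕ) = x := by
    rw [Fin.val_ofNat, Nat.mod_eq_of_lt hx]
  rw [← zero_add (2 ^ h)]
  refine ((IsForestPreorder.mk refl trans total_of_le).comap (Fin.ofNat (m + 1))).lt_add_two_pow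
    (fun i _ hi => hadj _ _ (SimpleGraph.pathGraph_adj.mpr (Or.inl ?_))) fun s hs hs_chain => ?_
  · rw [hval (by omega), hval hi]
  · have hs_lt : ∀ x ∈ s, x < m + 1 := fun x hx => (Finset.mem_Ico.mp (hs hx)).2
    rw [← Finset.card_image_of_injOn (f := Fin.ofNat (m + 1)) fun x hx y hy hxy => by
      rw [← hval (hs_lt x hx), ← hval (hs_lt y hy), hxy]]
    refine hchain _ fun u hu v hv => ?_
    obtain ⟨x, hx, rfl⟩ := Finset.mem_image.mp hu
    obtain ⟨y, hy, rfl⟩ := Finset.mem_image.mp hv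
    exact hs_chain x hx y hy

/-- the treedepth of the path on n vertices equals ⌈log₂(n+1)⌉. -/
theorem treedepth_pathGraph (n : ℕ) :
    treedepth (SimpleGraph.pathGraph n) = Nat.clog 2 (n + 1) :=
  IsLeast.csInf_eq ⟨treedepthLE_pathGraph_of_lt_two_pow (Nat.le_pow_clog one_lt_two (n + 1)),
    fun _ hT => (Nat.clog_le_iff_le_pow one_lt_two).mpr (lt_two_pow_of_treedepthLE_pathGraph hT)⟩
end

section
/- For natural numbers δ ≥ 1 and 0 ≤ s < 2^δ with binary digits b_0,…,b_{δ−1}, the system over nonnegative integers u, y_0,…,y_{δ−1}, z given by: u + y_0 = 1; 2y_j − y_{j+1} = 0 for j = 0,…,δ−2; and Σ_j b_j·y_j − z = 0, has exactly two solutions: one with u=1 and all other variables 0, and one with u=0, y_j = 2^j for all j, and z = s. -/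
/-! The chain `2 y_j = y_{j+1}` forces `y_j = 2^j y_0`, and `u + y_0 = 1` leaves only
`y_0 ∈ {0, 1}`. For `y_0 = 1` the last equation gives `z = Σ_j b_j 2^j`, which is `s` because the
binary expansion of `s < 2^δ` needs no digits beyond `δ`. -/

open Finset

theorem forall_mul_eq_succ_iff_eq_pow_mul {M : Type*} [Monoid M] {n : ℕ} (hn : 0 < n) (r : M)
    (y : Fin n → M) :
    (∀ j : Fin n, ∀ h : (j : ℕ) + 1 < n, r * y j = y ⟨(j : ℕ) + 1, h⟩) ↔
      ∀ j : Fin n, y j = r ^ (j : ℕ) * y ⟨0, hn⟩ := by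
  constructor
  · rintro h ⟨m, hm⟩
    induction m with
    | zero => simp
    | succ m ih => rw [← h ⟨m, by omega⟩ hm, ih (by omega), pow_succ', mul_assoc]
  · intro h j hj
    rw [h j, h ⟨(j : ℕ) + 1, hj⟩, pow_succ', mul_assoc]

theorem Nat.ite_testBit_eq_div_two_pow_mod_two (s j : ℕ) :
    (if s.testBit j then 1 else 0) = s / 2 ^ j % 2 := by
  rw [← Nat.toNat_testBit]
  cases s.testBit j <;> rfl

theorem Nat.sum_range_testBit_mul_two_pow (s n : ℕ) :
    ∑ j ∈ range n, (if s.testBit j then 1 else 0) * 2 ^ j = s % 2 ^ n := by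
  induction n with
  | zero => simp [Nat.mod_one]
  | succ n ih =>
    rw [sum_range_succ, ih, Nat.mod_pow_succ, Nat.ite_testBit_eq_div_two_pow_mod_two, mul_comm]

theorem Nat.sum_fin_testBit_mul_two_pow {s n : ℕ} (hs : s < 2 ^ n) :
    ∑ j : Fin n, (if s.testBit j then 1 else 0) * 2 ^ (j : ℕ) = s := by
  rw [Fin.sum_univ_eq_sum_range (fun j => (if s.testBit j then 1 else 0) * 2 ^ j) n,
    Nat.sum_range_testBit_mul_two_pow, Nat.mod_eq_of_lt hs]

/-- for δ ≥ 1 and 0 ≤ s < 2^δ with binary digits b₀,…,b_{δ−1},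
the system over nonnegative integers u, y₀,…,y_{δ−1}, z given by u + y₀ = 1,
2yⱼ − y_{j+1} = 0 (j = 0,…,δ−2) and Σⱼ bⱼ·yⱼ − z = 0 has exactly two solutions:
u = 1 with all other variables 0, and u = 0 with yⱼ = 2^j and z = s. -/
theorem number_gadget_two_solutions (δ s : ℕ) (hδ : 0 < δ) (hs : s < 2 ^ δ)
    (u z : ℕ) (y : Fin δ → ℕ) :
    (u + y ⟨0, hδ⟩ = 1 ∧
      (∀ j : Fin δ, ∀ h : (j : ℕ) + 1 < δ, 2 * y j = y ⟨(j : ℕ) + 1, h⟩) ∧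
      (∑ j : Fin δ, (if s.testBit (j : ℕ) then 1 else 0) * y j = z)) ↔
    ((u = 1 ∧ z = 0 ∧ ∀ j, y j = 0) ∨
      (u = 0 ∧ z = s ∧ ∀ j : Fin δ, y j = 2 ^ (j : ℕ))) := by
  have hbinary := Nat.sum_fin_testBit_mul_two_pow hs
  rw [forall_mul_eq_succ_iff_eq_pow_mul hδ]
  constructor
  · rintro ⟨hu, hy, rfl⟩
    generalize y ⟨0, hδ⟩ = c at hu hy
    obtain rfl | rfl : c = 0 ∨ c = 1 := by omega
    · exact .inl ⟨by omega, by simp [hy], by simp [hy]⟩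
    · exact .inr ⟨by omega, by simp only [hy, mul_one, hbinary], by simp [hy]⟩
  · rintro (⟨rfl, rfl, hy⟩ | ⟨rfl, rfl, hy⟩)
    · simp [hy]
    · simp only [hy, pow_zero, zero_add, mul_one, hbinary, implies_true, and_self]
end
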